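/- arXiv:1201.2202 — 2 statements merged into one kernel-verified Lean document; each statement's English description precedes it below -/
import Mathlib

section
/- Let α = 1/2^{23}. Let G be a graph on n vertices with minimum degree at least n/2, and let A be a set of vertices with n/2 ≤ |A| ≤ (1/2 + 16α)·n such that the bipartite graph induced by the edges between A and Ā has at least (1/4 − 14α)·n² edges and minimum degree at least n/64, and moreover either |A| = ⌈n/2⌉ or the induced subgraph G[A] has maximum degree at most n/32. Then for every fixed positive real β there exists a constant C = C(β) such that for every p ≥ C·log n / n, the random subgraph G_p asymptotically almost surely complements every its subgraph that has property BIPRE(1/6) (with respect to the partition V₁ = A, V₂ = Ā) and has at most β·n·log n edges. -/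
open SimpleGraph Finset
open scoped Classical

universe u

noncomputable section

/-- `1/2^23`, the value of `α` fixed in the random-subgraph section of the paper. -/
def paperAlpha : ℝ := 1 / 2 ^ 23

/-- The graph on `V` consisting of the edges of the walk `P`. -/
def walkGraph {V : Type u} {G : SimpleGraph V} {a b : V} (P : G.Walk a b) : SimpleGraph V :=
  SimpleGraph.fromEdgeSet {e | e ∈ P.edges}

/-- There is a path of length `ℓ` from `v` to `w` in `H` containing the edge `e`. -/
def SameLenPath {V : Type u} (H : SimpleGraph V) (ℓ : ℕ) (e : Sym2 V) (v w : V) : Prop :=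
  ∃ Q : H.Walk v w, Q.IsPath ∧ Q.length = ℓ ∧ e ∈ Q.edges

/-- There is a path in `H` longer than `ℓ` containing the edge `e`. -/
def LongerPath {V : Type u} (H : SimpleGraph V) (ℓ : ℕ) (e : Sym2 V) : Prop :=
  ∃ (x y : V) (Q : H.Walk x y), Q.IsPath ∧ ℓ < Q.length ∧ e ∈ Q.edges

/-- `S` and `T` witness the rotation property of `G` for the path `P` with fixed edge `e`:
`S` has at least `ξ n` vertices, and for every `v ∈ S` the set `T v` has at least `ξ n`
vertices and for every `w ∈ T v` there is a path of the same length as `P` in `G ∪ P`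
containing `e` with endpoints `v` and `w`. -/
def REwitness {V : Type u} [Fintype V] (ξ : ℝ) (G : SimpleGraph V) {a b : V}
    (P : (⊤ : SimpleGraph V).Walk a b) (e : Sym2 V) (S : Finset V) (T : V → Finset V) :
    Prop :=
  ξ * (Fintype.card V : ℝ) ≤ (S.card : ℝ) ∧
    ∀ v ∈ S, ξ * (Fintype.card V : ℝ) ≤ ((T v).card : ℝ) ∧
      ∀ w ∈ T v, SameLenPath (G ⊔ walkGraph P) P.length e v w

/-- Property `RE(ξ)`. -/
def PropRE {V : Type u} [Fintype V] (ξ : ℝ) (G : SimpleGraph V) : Prop :=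
  G.Connected ∧
    ∀ (a b : V) (P : (⊤ : SimpleGraph V).Walk a b), P.IsPath → ∀ e ∈ P.edges,
      LongerPath (G ⊔ walkGraph P) P.length e ∨ ∃ S T, REwitness ξ G P e S T

/-- `G₂` complements `G₁` (a graph with property `RE(ξ)`). -/
def ComplementsRE {V : Type u} [Fintype V] (ξ : ℝ) (G₁ G₂ : SimpleGraph V) : Prop :=
  ∀ (a b : V) (P : (⊤ : SimpleGraph V).Walk a b), P.IsPath → ∀ e ∈ P.edges,
    LongerPath (G₁ ⊔ walkGraph P) P.length e ∨
      ∃ S T, REwitness ξ G₁ P e S T ∧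
        ∃ v ∈ S, ∃ w ∈ T v, (G₁ ⊔ G₂ ⊔ walkGraph P).Adj v w

/-- The set `N(X)` of vertices having a neighbour in `X`. -/
def nbrSet {V : Type u} [Fintype V] (G : SimpleGraph V) (X : Finset V) : Finset V :=
  Finset.univ.filter fun v => ∃ x ∈ X, G.Adj x v

/-- `e(A,B)`: the number of pairs `(a,b) ∈ A × B` with `{a,b}` an edge of `G`. -/
def eBetween {V : Type u} (G : SimpleGraph V) (A B : Finset V) : ℕ :=
  ((A ×ˢ B).filter fun p => G.Adj p.1 p.2).card

/-- `e(A)`: the number of edges of `G` with both endpoints in `A`. -/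
def eIn {V : Type u} [Fintype V] (G : SimpleGraph V) (A : Finset V) : ℕ :=
  (G.edgeFinset.filter fun e => ∀ v ∈ e, v ∈ A).card

/-- A half-set: a set of `⌊n/2⌋` or `⌈n/2⌉` vertices. -/
def IsHalfSet (n : ℕ) (A : Finset (Fin n)) : Prop :=
  A.card = n / 2 ∨ A.card = (n + 1) / 2

/-- A graph is Hamilton connected if every pair of distinct vertices is joined by a
Hamilton path. -/
def HamiltonConnected {V : Type u} (G : SimpleGraph V) : Prop :=
  ∀ x y : V, x ≠ y → ∃ p : G.Walk x y, p.IsHamiltonian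

/-- The probability that the random subgraph of `G`, obtained by retaining every edge of `G`
independently with probability `p`, satisfies the predicate `Q`. -/
def subgraphProb {V : Type u} [Fintype V] (G : SimpleGraph V) (p : ℝ)
    (Q : SimpleGraph V → Prop) : ℝ :=
  ∑ S ∈ G.edgeFinset.powerset,
    if Q (SimpleGraph.fromEdgeSet (↑S : Set (Sym2 V))) then
      p ^ S.card * (1 - p) ^ (G.edgeFinset.card - S.card)
    else 0

/-- `MakerWins board win b M B` : in the Maker-Breaker game on `board` with winning-set
predicate `win` (on Maker's claimed set) and Breaker bias `b`, with Maker to move, Maker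
having claimed `M` and Breaker having claimed `B`, Maker has a winning strategy. -/
inductive MakerWins {X : Type u} (board : Finset X) (win : Finset X → Prop) (b : ℕ) :
    Finset X → Finset X → Prop where
  | win_now : ∀ M B : Finset X, win M → MakerWins board win b M B
  | move : ∀ (M B : Finset X) (x : X), x ∈ board → x ∉ M → x ∉ B →
      (∀ B' : Finset X, B' ⊆ board \ (insert x M ∪ B) → B'.card ≤ b →
        MakerWins board win b (insert x M) (B ∪ B')) →
      MakerWins board win b M B

/-- A half-expander with parameters `ε` and `r`. -/
def IsHalfExpander {V : Type u} [Fintype V] (G : SimpleGraph V) (ε r : ℝ) : Prop :=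
  (∀ X : Finset V, (X.card : ℝ) ≤ ε * (Fintype.card V : ℝ) / r →
      r * (X.card : ℝ) ≤ ((nbrSet G X).card : ℝ)) ∧
  (∀ X : Finset V, (Fintype.card V : ℝ) / (ε * r) ≤ (X.card : ℝ) →
      (1 / 2 - ε) * (Fintype.card V : ℝ) ≤ ((nbrSet G X).card : ℝ)) ∧
  (∀ X Y : Finset V, Disjoint X Y →
      (1 / 2 - ε ^ ((1 : ℝ) / 5)) * (Fintype.card V : ℝ) ≤ (X.card : ℝ) →
      (1 / 2 - ε ^ ((1 : ℝ) / 5)) * (Fintype.card V : ℝ) ≤ (Y.card : ℝ) →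
      2 * (Fintype.card V : ℝ) < (eBetween G X Y : ℝ))

/-- An expander with parameters `ε` and `r`. -/
def IsExpander {V : Type u} [Fintype V] (G : SimpleGraph V) (ε r : ℝ) : Prop :=
  (∀ X : Finset V, (X.card : ℝ) ≤ (Fintype.card V : ℝ) / r ^ ((3 : ℝ) / 2) →
      r * (X.card : ℝ) ≤ ((nbrSet G X).card : ℝ)) ∧
  (∀ X : Finset V, (Fintype.card V : ℝ) / r ^ ((3 : ℝ) / 4) ≤ (X.card : ℝ) →
      (1 - ε) * (Fintype.card V : ℝ) ≤ ((nbrSet G X).card : ℝ))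

/-- A special frame `(V₁, V₂, S_V, S_E)` of `G` (with `|V₁| = |V₂| + k`). -/
structure IsSpecialFrame {V : Type u} [Fintype V] (G : SimpleGraph V) (k : ℕ)
    (V₁ V₂ SV : Finset V) (SE : Finset (Sym2 V)) : Prop where
  union_eq : V₁ ∪ V₂ = Finset.univ
  disj : Disjoint V₁ V₂
  card_eq : V₁.card = V₂.card + k
  SV_sub : SV ⊆ V₁
  SV_card : SV.card = k
  SE_card : SE.card = k
  SE_isEdge : ∀ e ∈ SE, e ∈ G.edgeSet
  SE_sub : ∀ e ∈ SE, ∀ v ∈ e, v ∈ V₁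
  SE_disj : ∀ e ∈ SE, ∀ e' ∈ SE, e ≠ e' → ∀ v ∈ e, v ∉ e'
  SV_unique : ∀ v ∈ SV, ∃! e, e ∈ SE ∧ v ∈ e

/-- A matched special frame `(V₁, V₂, S_V, S_E, f)` of `G`:  a special frame together with
a perfect matching `f` (in `G`) between the vertices of `V₁' = V₁ \ S_V` and `V₂`. -/
structure IsMatchedFrame {V : Type u} [Fintype V] (G : SimpleGraph V) (k : ℕ)
    (V₁ V₂ SV : Finset V) (SE : Finset (Sym2 V)) (f : V → V)
    extends IsSpecialFrame G k V₁ V₂ SV SE : Prop where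
  f_mem : ∀ v ∈ V₁ \ SV, f v ∈ V₂ ∧ G.Adj v (f v) ∧ f (f v) = v
  f_mem' : ∀ w ∈ V₂, f w ∈ V₁ \ SV ∧ f (f w) = w

/-- The framed subgraph: the subgraph of `G` induced by the edges between `V₁` and `V₂`. -/
def framedSubgraph {V : Type u} (G : SimpleGraph V) (V₁ V₂ : Finset V) : SimpleGraph V where
  Adj v w := G.Adj v w ∧ ((v ∈ V₁ ∧ w ∈ V₂) ∨ (v ∈ V₂ ∧ w ∈ V₁))
  symm := by
    constructor
    intro v w h
    refine ⟨h.1.symm, ?_⟩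
    tauto
  loopless := ⟨fun v h => G.loopless.irrefl v h.1⟩

/-- A proper walk with respect to the matched special frame `(V₁, V₂, SV, SE, f)`:
a path all of whose edges intersect both `V₁` and `V₂` or are special edges, which
contains the special edge of each of its special vertices, and which satisfies
`V₁' ∩ V(P) = f(V₂ ∩ V(P))`. -/
def ProperWalk {V : Type u} (V₁ V₂ SV : Finset V) (SE : Finset (Sym2 V)) (f : V → V)
    {G' : SimpleGraph V} {a b : V} (P : G'.Walk a b) : Prop :=
  P.IsPath ∧
  (V₁ \ SV).filter (· ∈ P.support) = (V₂.filter (· ∈ P.support)).image f ∧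
  (∀ v ∈ SV, v ∈ P.support → ∃ e ∈ SE, v ∈ e ∧ e ∈ P.edges) ∧
  (∀ e ∈ P.edges, e ∈ SE ∨ ((∃ v ∈ V₁, v ∈ e) ∧ (∃ v ∈ V₂, v ∈ e)))

/-- There is a proper path in `H` longer than `ℓ`. -/
def BipLonger {V : Type u} (H : SimpleGraph V) (V₁ V₂ SV : Finset V) (SE : Finset (Sym2 V))
    (f : V → V) (ℓ : ℕ) : Prop :=
  ∃ (x y : V) (Q : H.Walk x y), ProperWalk V₁ V₂ SV SE f Q ∧ ℓ < Q.length

/-- `S ⊆ V₂` and `T` witness the bipartite rotation property of `G` for the proper path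
`P`. -/
def BipREwitness {V : Type u} [Fintype V] (ξ : ℝ) (G : SimpleGraph V)
    (V₁ V₂ SV : Finset V) (SE : Finset (Sym2 V)) (f : V → V) {a b : V}
    (P : (⊤ : SimpleGraph V).Walk a b) (S : Finset V) (T : V → Finset V) : Prop :=
  S ⊆ V₂ ∧ ξ * (Fintype.card V : ℝ) ≤ (S.card : ℝ) ∧
    ∀ v ∈ S, T v ⊆ V₁ ∧ ξ * (Fintype.card V : ℝ) ≤ ((T v).card : ℝ) ∧
      ∀ w ∈ T v, ∃ Q : (G ⊔ walkGraph P).Walk v w,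
        ProperWalk V₁ V₂ SV SE f Q ∧ Q.length = P.length

/-- Property `BIPRE(ξ)` with respect to the partition `(V₁, V₂)`. -/
def BIPREwrt {V : Type u} [Fintype V] (ξ : ℝ) (G : SimpleGraph V) (V₁ V₂ : Finset V) :
    Prop :=
  ∃ (k : ℕ) (SV : Finset V) (SE : Finset (Sym2 V)) (f : V → V),
    IsMatchedFrame G k V₁ V₂ SV SE f ∧ (framedSubgraph G V₁ V₂).Connected ∧
      ∀ (a b : V) (P : (⊤ : SimpleGraph V).Walk a b), ProperWalk V₁ V₂ SV SE f P →
        BipLonger (G ⊔ walkGraph P) V₁ V₂ SV SE f P.length ∨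
          ∃ S T, BipREwitness ξ G V₁ V₂ SV SE f P S T

/-- Property `BIPRE(ξ)`. -/
def BIPRE {V : Type u} [Fintype V] (ξ : ℝ) (G : SimpleGraph V) : Prop :=
  ∃ V₁ V₂ : Finset V, BIPREwrt ξ G V₁ V₂

/-- `G₂` complements `G₁` (a graph with property `BIPRE(ξ)` w.r.t. `(V₁, V₂)`). -/
def BipComplementsWrt {V : Type u} [Fintype V] (ξ : ℝ) (G₁ G₂ : SimpleGraph V)
    (V₁ V₂ : Finset V) : Prop :=
  ∃ (k : ℕ) (SV : Finset V) (SE : Finset (Sym2 V)) (f : V → V),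
    IsMatchedFrame G₁ k V₁ V₂ SV SE f ∧ (framedSubgraph G₁ V₁ V₂).Connected ∧
      ∀ (a b : V) (P : (⊤ : SimpleGraph V).Walk a b), ProperWalk V₁ V₂ SV SE f P →
        BipLonger (G₁ ⊔ walkGraph P) V₁ V₂ SV SE f P.length ∨
          ∃ S T, BipREwitness ξ G₁ V₁ V₂ SV SE f P S T ∧
            ∃ v ∈ S, ∃ w ∈ T v, (G₁ ⊔ G₂ ⊔ walkGraph P).Adj v w

/-- The expansion conditions of a `k`-bipartite-expander with parameters `ε` and `r`,
with respect to the frame data `(V₁, V₂, SE)` (here `V₁'' = V₁ ∖ V(S_E)`). -/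
def IsBipExpander {V : Type u} [Fintype V] (G : SimpleGraph V) (V₁ V₂ : Finset V)
    (SE : Finset (Sym2 V)) (ε r : ℝ) : Prop :=
  (∀ X ⊆ V₁,
    ((X.card : ℝ) ≤ (Fintype.card V : ℝ) / r ^ ((3 : ℝ) / 2) →
      r * (X.card : ℝ) ≤ ((nbrSet G X ∩ V₂).card : ℝ)) ∧
    ((Fintype.card V : ℝ) / r ^ ((3 : ℝ) / 4) ≤ (X.card : ℝ) →
      (1 - ε) * (V₂.card : ℝ) ≤ ((nbrSet G X ∩ V₂).card : ℝ))) ∧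
  (∀ Y ⊆ V₂,
    ((Y.card : ℝ) ≤ (Fintype.card V : ℝ) / r ^ ((3 : ℝ) / 2) →
      r * (Y.card : ℝ) ≤
        ((nbrSet G Y ∩ V₁.filter fun v => ∀ e ∈ SE, v ∉ e).card : ℝ)) ∧
    ((Fintype.card V : ℝ) / r ^ ((3 : ℝ) / 4) ≤ (Y.card : ℝ) →
      (1 - ε) * ((V₁.filter fun v => ∀ e ∈ SE, v ∉ e).card : ℝ) ≤
        ((nbrSet G Y ∩ V₁.filter fun v => ∀ e ∈ SE, v ∉ e).card : ℝ)))

end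

/-!
Fix, for each graph with property `BIPRE`, one matched special frame witnessing it. If `H ≤ G`
fails the property, some `H' ≤ H` with at most `β n log n` edges has a proper path `P` that
`H' ∪ P` cannot extend, which has rotation witnesses `(S, T)`, and for none of them does `H`
join some `v ∈ S` to `T v`. Fixing one witness per pair of edge sets `(E(H'), E(P))`, the failure
lies in a union of events "`H` contains `E(H')` and avoids a fixed set `F` of edges of `G`".
Since `G` misses at most `14 α n²` pairs between `A` and `Aᶜ` while `|S|, |T v| ≥ n / 6`,
`|F| ≥ n² / 72`, so each event has probability at most `p ^ e(H') * exp (-p n² / 72)`.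
There are at most `n ^ (2 n)` edge sets of paths, and `∑ p ^ e(H') ≤ exp (8 β n log n + p n² / 256)`
over the sparse `H'`; for `p ≥ 144 (8 β + 3) log n / n` the union bound is at most `exp (-n)`.
-/

section RandomSubgraph

variable {V : Type*} [Fintype V] (G : SimpleGraph V) {p : ℝ}

lemma edgeSet_fromEdgeSet_of_subset {S : Finset (Sym2 V)} (hS : S ⊆ G.edgeFinset) :
    (fromEdgeSet (S : Set (Sym2 V))).edgeSet = S := by
  rw [edgeSet_fromEdgeSet, sdiff_eq_left, Set.disjoint_left]
  exact fun e he => G.not_isDiag_of_mem_edgeSet (mem_edgeFinset.mp (hS he))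

lemma fromEdgeSet_le_of_subset {S : Finset (Sym2 V)} (hS : S ⊆ G.edgeFinset) :
    fromEdgeSet (S : Set (Sym2 V)) ≤ G := by
  rw [← edgeSet_subset_edgeSet, edgeSet_fromEdgeSet_of_subset G hS, ← coe_edgeFinset]
  exact_mod_cast hS

lemma subgraphProb_add_subgraphProb_not (Q : SimpleGraph V → Prop) :
    subgraphProb G p Q + subgraphProb G p (fun H => ¬ Q H) = 1 := by
  rw [subgraphProb, subgraphProb, ← sum_add_distrib]
  calc _ = ∑ S ∈ G.edgeFinset.powerset, p ^ #S * (1 - p) ^ (#G.edgeFinset - #S) :=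
        sum_congr rfl fun S _ => by by_cases h : Q (fromEdgeSet S) <;> simp [h]
    _ = 1 := by rw [sum_pow_mul_eq_add_pow, add_sub_cancel, one_pow]

lemma pow_mul_one_sub_pow_nonneg (hp₀ : 0 ≤ p) (hp₁ : p ≤ 1) (a b : ℕ) :
    0 ≤ p ^ a * (1 - p) ^ b :=
  mul_nonneg (pow_nonneg hp₀ a) (pow_nonneg (sub_nonneg.mpr hp₁) b)

lemma subgraphProb_mono (hp₀ : 0 ≤ p) (hp₁ : p ≤ 1) {Q R : SimpleGraph V → Prop}
    (h : ∀ H ≤ G, Q H → R H) : subgraphProb G p Q ≤ subgraphProb G p R := by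
  refine sum_le_sum fun S hS => ?_
  have hle := fromEdgeSet_le_of_subset G (mem_powerset.mp hS)
  have hw := pow_mul_one_sub_pow_nonneg hp₀ hp₁ #S (#G.edgeFinset - #S)
  split_ifs with hQ hR <;> first | exact le_rfl | exact hw | exact absurd (h _ hle hQ) hR

lemma subgraphProb_exists_le_sum (hp₀ : 0 ≤ p) (hp₁ : p ≤ 1) {ι : Type*} (I : Finset ι)
    (R : ι → SimpleGraph V → Prop) :
    subgraphProb G p (fun H => ∃ i ∈ I, R i H) ≤ ∑ i ∈ I, subgraphProb G p (R i) := by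
  simp only [subgraphProb]
  rw [sum_comm]
  refine sum_le_sum fun S _ => ?_
  have hw := pow_mul_one_sub_pow_nonneg hp₀ hp₁ #S (#G.edgeFinset - #S)
  have hnonneg : ∀ i ∈ I, 0 ≤ if R i (fromEdgeSet S) then
      p ^ #S * (1 - p) ^ (#G.edgeFinset - #S) else 0 := fun i _ => by
    split_ifs <;> first | exact hw | exact le_rfl
  split_ifs with h
  · obtain ⟨i, hi, hR⟩ := h
    exact (single_le_sum hnonneg hi).trans_eq' (if_pos hR)
  · exact sum_nonneg hnonneg

lemma subgraphProb_contains_avoids_le (hp₀ : 0 ≤ p) (hp₁ : p ≤ 1) {s F : Finset (Sym2 V)}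
    (hs : s ⊆ G.edgeFinset) (hF : F ⊆ G.edgeFinset) :
    subgraphProb G p (fun H => ↑s ⊆ H.edgeSet ∧ ∀ e ∈ F, e ∉ H.edgeSet) ≤
      p ^ #s * (1 - p) ^ #F := by
  have hq : 0 ≤ 1 - p := sub_nonneg.mpr hp₁
  -- Expanding `∏ (a e + b e)` by `prod_add` gives, for each `S`, the weight of `S` if `S`
  -- contains `s` and avoids `F`, and `0` otherwise.
  set a : Sym2 V → ℝ := fun e => if e ∈ F then 0 else p
  set b : Sym2 V → ℝ := fun e => if e ∈ s then 0 else 1 - p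
  have ha : ∀ e, 0 ≤ a e := fun e => by dsimp only [a]; split_ifs <;> positivity
  have hb : ∀ e, 0 ≤ b e := fun e => by dsimp only [b]; split_ifs <;> positivity
  calc subgraphProb G p (fun H => ↑s ⊆ H.edgeSet ∧ ∀ e ∈ F, e ∉ H.edgeSet)
      ≤ ∑ S ∈ G.edgeFinset.powerset, (∏ e ∈ S, a e) * ∏ e ∈ G.edgeFinset \ S, b e := by
        refine sum_le_sum fun S hS => ?_
        have hSE := mem_powerset.mp hS
        simp only [edgeSet_fromEdgeSet_of_subset G hSE]
        split_ifs with h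
        · obtain ⟨hsS, hFS⟩ := h
          rw [coe_subset] at hsS
          rw [prod_congr rfl fun e he => if_neg fun heF => hFS e heF (mem_coe.mpr he),
            prod_congr rfl fun e he => if_neg fun hes => (mem_sdiff.mp he).2 (hsS hes),
            prod_const, prod_const, card_sdiff_of_subset hSE]
        · exact mul_nonneg (prod_nonneg fun e _ => ha e) (prod_nonneg fun e _ => hb e)
    _ = ∏ e ∈ G.edgeFinset, (a e + b e) := (prod_add a b _).symm
    _ ≤ ∏ e ∈ G.edgeFinset, ((if e ∈ s then p else 1) * (if e ∈ F then 1 - p else 1)) := by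
        refine prod_le_prod (fun e _ => add_nonneg (ha e) (hb e)) fun e _ => ?_
        dsimp only [a, b]
        split_ifs <;> nlinarith
    _ = p ^ #s * (1 - p) ^ #F := by
        rw [prod_mul_distrib, prod_ite_mem, prod_ite_mem, inter_eq_right.mpr hs,
          inter_eq_right.mpr hF, prod_const, prod_const]

end RandomSubgraph

section Counting

open Real in
lemma sum_pow_card_le_exp {α : Type*} (E : Finset α) {p a m : ℝ} (hp : 0 ≤ p) (ha : 0 ≤ a) :
    ∑ s ∈ E.powerset.filter (fun s => (#s : ℝ) ≤ m), p ^ #s ≤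
      exp (a * m + p * #E * exp (-a)) := by
  set x := p * exp (-a) with hx_def
  have hsplit : ∀ k : ℕ, p ^ k = exp (a * k) * x ^ k := fun k => by
    rw [mul_comm a, exp_nat_mul, ← mul_pow, mul_left_comm, ← exp_add, add_neg_cancel, exp_zero,
      mul_one]
  calc ∑ s ∈ E.powerset.filter (fun s => (#s : ℝ) ≤ m), p ^ #s
      ≤ ∑ s ∈ E.powerset.filter (fun s => (#s : ℝ) ≤ m), exp (a * m) * x ^ #s := by
        refine sum_le_sum fun s hs => ?_
        rw [hsplit]
        gcongr
        exact (mem_filter.mp hs).2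
    _ ≤ ∑ s ∈ E.powerset, exp (a * m) * x ^ #s :=
        sum_le_sum_of_subset_of_nonneg (filter_subset _ _) fun _ _ _ => by positivity
    _ = exp (a * m) * (x + 1) ^ #E := by
        rw [← mul_sum, ← sum_pow_mul_eq_add_pow]
        simp only [one_pow, mul_one]
    _ ≤ exp (a * m) * exp x ^ #E := by
        gcongr
        linarith [add_one_le_exp x]
    _ = exp (a * m + p * #E * exp (-a)) := by
        rw [← exp_nat_mul, ← exp_add, hx_def]
        congr 1
        ring

lemma card_filter_powerset_card_lt_le {α : Type*} (t : Finset α) (k : ℕ) :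
    #(t.powerset.filter (fun s => #s < k)) ≤ (#t + 1) ^ k := by
  calc #(t.powerset.filter (fun s => #s < k))
      ≤ #((range k).biUnion fun j => t.powersetCard j) := by
        refine card_le_card fun s hs => ?_
        rw [mem_filter, mem_powerset] at hs
        exact mem_biUnion.mpr ⟨#s, mem_range.mpr hs.2, mem_powersetCard.mpr ⟨hs.1, rfl⟩⟩
    _ ≤ ∑ j ∈ range k, (#t).choose j := by
        simpa only [card_powersetCard] using card_biUnion_le (s := range k)
          (t := fun j => t.powersetCard j)
    _ ≤ ∑ j ∈ range (k + 1), #t ^ j * 1 ^ (k - j) * k.choose j := by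
        refine (sum_le_sum fun j hj => ?_).trans
          (sum_le_sum_of_subset (range_subset_range.mpr k.le_succ))
        rw [one_pow, mul_one]
        exact (Nat.choose_le_pow _ _).trans
          (Nat.le_mul_of_pos_right _ (Nat.choose_pos (mem_range.mp hj).le))
    _ = (#t + 1) ^ k := (add_pow _ _ _).symm

lemma exp_neg_eight_le : Real.exp (-8) ≤ 1 / 256 := by
  rw [Real.exp_neg, one_div]
  gcongr
  calc (256 : ℝ) = 2 ^ 8 := by norm_num
    _ ≤ Real.exp 1 ^ 8 := by gcongr; linarith [Real.add_one_le_exp 1]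
    _ = Real.exp 8 := by rw [← Real.exp_nat_mul]; norm_num

variable {V : Type*} [Fintype V]

lemma card_edgeFinset_le_sq (G : SimpleGraph V) :
    (#G.edgeFinset : ℝ) ≤ Fintype.card V ^ 2 := by
  have h := Nat.cast_le (α := ℝ).mpr G.card_edgeFinset_le_card_choose_two
  rw [Nat.cast_choose_two] at h
  nlinarith [(Nat.cast_nonneg (Fintype.card V) : (0 : ℝ) ≤ _)]

lemma card_mul_card_compl_le [DecidableEq V] (A : Finset V) :
    (#A * #Aᶜ : ℝ) ≤ Fintype.card V ^ 2 / 4 := by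
  have h : (#A + #Aᶜ : ℝ) = Fintype.card V := by exact_mod_cast card_add_card_compl A
  nlinarith [sq_nonneg ((#A : ℝ) - #Aᶜ)]

lemma card_short_edgeSets_le_exp (hV : 2 ≤ Fintype.card V) :
    (#((univ : Finset (Sym2 V)).powerset.filter fun Ef => #Ef < Fintype.card V) : ℝ) ≤
      Real.exp (2 * Fintype.card V * Real.log (Fintype.card V)) := by
  set N := Fintype.card V
  have hN : (2 : ℝ) ≤ N := by exact_mod_cast hV
  have hsym : ((#(univ : Finset (Sym2 V)) + 1 : ℕ) : ℝ) ≤ (N : ℝ) ^ 2 := by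
    rw [card_univ, Sym2.card]
    push_cast [Nat.cast_choose_two]
    nlinarith
  calc (#((univ : Finset (Sym2 V)).powerset.filter fun Ef => #Ef < N) : ℝ)
      ≤ ((#(univ : Finset (Sym2 V)) + 1 : ℕ) : ℝ) ^ N := by
        exact_mod_cast card_filter_powerset_card_lt_le _ N
    _ ≤ ((N : ℝ) ^ 2) ^ N := by gcongr
    _ = Real.exp (2 * N * Real.log N) := by
        rw [← pow_mul, ← Real.rpow_natCast, Real.rpow_def_of_pos (by linarith)]
        push_cast
        ring_nf

end Counting

section CrossEdges

variable {V : Type*} (G : SimpleGraph V)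

lemma eBetween_eq_sum (X Y : Finset V) :
    eBetween G X Y = ∑ x ∈ X, #(Y.filter (G.Adj x)) := by
  simp only [eBetween, card_filter, sum_product]

lemma eBetween_comm (X Y : Finset V) : eBetween G X Y = eBetween G Y X :=
  haveI := G.symm
  Rel.card_interedges_comm (r := G.Adj) X Y

noncomputable def crossEdges (S : Finset V) (T : V → Finset V) : Finset (Sym2 V) :=
  (S.sigma fun v => (T v).filter (G.Adj v)).image fun x => s(x.1, x.2)

lemma crossEdges_subset_edgeFinset [Fintype V] (S : Finset V) (T : V → Finset V) :
    crossEdges G S T ⊆ G.edgeFinset := by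
  intro e he
  simp only [crossEdges, mem_image, mem_sigma, mem_filter] at he
  obtain ⟨⟨v, w⟩, ⟨-, -, hvw⟩, rfl⟩ := he
  exact G.mem_edgeFinset.mpr hvw

lemma card_crossEdges {X Y S : Finset V} {T : V → Finset V} (hXY : Disjoint X Y)
    (hS : S ⊆ X) (hT : ∀ v ∈ S, T v ⊆ Y) :
    #(crossEdges G S T) = ∑ v ∈ S, #((T v).filter (G.Adj v)) := by
  rw [crossEdges, card_image_of_injOn, card_sigma]
  rintro ⟨v, w⟩ hvw ⟨v', w'⟩ hvw' h
  simp only [coe_sigma, Set.mem_sigma_iff, mem_coe, mem_filter] at hvw hvw'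
  rcases Sym2.eq_iff.mp h with ⟨rfl, rfl⟩ | ⟨rfl, -⟩
  · rfl
  · exact (Finset.disjoint_left.mp hXY (hS hvw.1) (hT v' hvw'.1 hvw'.2.1)).elim

lemma le_card_crossEdges [Fintype V] [DecidableEq V] {A S : Finset V} {T : V → Finset V}
    {x d : ℝ} (hA : #A * #Aᶜ - d ≤ eBetween G A Aᶜ) (hS : S ⊆ Aᶜ) (hT : ∀ v ∈ S, T v ⊆ A)
    (hx : 0 ≤ x) (hScard : x ≤ #S) (hTcard : ∀ v ∈ S, x ≤ #(T v)) :
    x ^ 2 - d ≤ #(crossEdges G S T) := by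
  -- `v ∈ S` misses at most as many vertices of `T v` as of `A`, and the misses of all
  -- `v ∈ Aᶜ` add up to `|A| |Aᶜ| - e(A, Aᶜ) ≤ d`.
  have hsplit : ∑ v ∈ S, (#((T v).filter (G.Adj v)) : ℝ) +
      ∑ v ∈ S, (#((T v).filter (¬ G.Adj v ·)) : ℝ) = ∑ v ∈ S, (#(T v) : ℝ) := by
    rw [← sum_add_distrib]
    exact_mod_cast sum_congr rfl fun v _ => card_filter_add_card_filter_not _
  have hmissing : ∑ v ∈ S, (#((T v).filter (¬ G.Adj v ·)) : ℝ) ≤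
      ∑ v ∈ Aᶜ, (#(A.filter (¬ G.Adj v ·)) : ℝ) := by
    exact_mod_cast (sum_le_sum fun v hv => card_le_card (filter_subset_filter _ (hT v hv))).trans
      (sum_le_sum_of_subset hS)
  have htotal : ∑ v ∈ Aᶜ, #(A.filter (¬ G.Adj v ·)) + eBetween G A Aᶜ = #Aᶜ * #A := by
    rw [eBetween_comm, eBetween_eq_sum, ← sum_add_distrib, ← smul_eq_mul, ← sum_const]
    exact sum_congr rfl fun v _ => by rw [add_comm, card_filter_add_card_filter_not]
  have htotal' : ∑ v ∈ Aᶜ, (#(A.filter (¬ G.Adj v ·)) : ℝ) + eBetween G A Aᶜ = #Aᶜ * #A := by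
    exact_mod_cast htotal
  have hsum : #S * x ≤ ∑ v ∈ S, (#(T v) : ℝ) := by
    simpa only [sum_const, nsmul_eq_mul] using sum_le_sum hTcard
  rw [card_crossEdges G disjoint_compl_left hS hT]
  push_cast
  nlinarith [mul_le_mul_of_nonneg_left hScard hx]

lemma subgraphProb_contains_witnesses_edgeless_le [Fintype V] {p : ℝ} (hp₀ : 0 ≤ p)
    (hp₁ : p ≤ 1) {s : Finset (Sym2 V)} (hs : s ⊆ G.edgeFinset) {q : ℝ}
    (W : Finset V → (V → Finset V) → Prop) (hq : ∀ S T, W S T → q ≤ #(crossEdges G S T)) :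
    subgraphProb G p (fun H => ↑s ⊆ H.edgeSet ∧ (∃ S T, W S T) ∧
      ∀ S T, W S T → ∀ v ∈ S, ∀ w ∈ T v, ¬ H.Adj v w) ≤ p ^ #s * Real.exp (-(p * q)) := by
  by_cases hW : ∃ S T, W S T
  · obtain ⟨S, T, hST⟩ := hW
    calc _ ≤ subgraphProb G p
          (fun H => ↑s ⊆ H.edgeSet ∧ ∀ e ∈ crossEdges G S T, e ∉ H.edgeSet) := by
          refine subgraphProb_mono G hp₀ hp₁ fun H _ ⟨hsH, _, hno⟩ =>
            ⟨hsH, fun e he heH => ?_⟩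
          simp only [crossEdges, mem_image, mem_sigma, mem_filter] at he
          obtain ⟨⟨v, w⟩, ⟨hv, hw, -⟩, rfl⟩ := he
          exact hno S T hST v hv w hw heH
      _ ≤ p ^ #s * (1 - p) ^ #(crossEdges G S T) :=
          subgraphProb_contains_avoids_le G hp₀ hp₁ hs (crossEdges_subset_edgeFinset G S T)
      _ ≤ p ^ #s * Real.exp (-p) ^ #(crossEdges G S T) := by
          gcongr
          exact Real.one_sub_le_exp_neg p
      _ ≤ p ^ #s * Real.exp (-(p * q)) := by
          rw [← Real.exp_nat_mul]
          gcongr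
          nlinarith [hq S T hST]
  · calc _ ≤ subgraphProb G p (fun _ => False) :=
          subgraphProb_mono G hp₀ hp₁ fun _ _ h => hW h.2.1
      _ = 0 := by simp [subgraphProb]
      _ ≤ _ := by positivity

end CrossEdges

section Rotation

variable {V : Type*} {ξ : ℝ} {V₁ V₂ SV : Finset V} {SE : Finset (Sym2 V)} {f : V → V}
  {k : ℕ}

lemma walkGraph_eq_fromEdgeSet {G : SimpleGraph V} {a b : V} (P : G.Walk a b) :
    walkGraph P = fromEdgeSet ↑P.edges.toFinset := by
  rw [Walk.coe_edges_toFinset]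
  rfl

lemma SimpleGraph.Walk.IsPath.length_eq_card_edges_toFinset {G : SimpleGraph V} {a b : V}
    {P : G.Walk a b} (hP : P.IsPath) : P.length = #P.edges.toFinset := by
  rw [List.toFinset_card_of_nodup hP.isTrail.edges_nodup, P.length_edges]

variable [Fintype V]

def IsBIPREFrame (ξ : ℝ) (G : SimpleGraph V) (V₁ V₂ : Finset V) (k : ℕ) (SV : Finset V)
    (SE : Finset (Sym2 V)) (f : V → V) : Prop :=
  IsMatchedFrame G k V₁ V₂ SV SE f ∧ (framedSubgraph G V₁ V₂).Connected ∧
    ∀ (a b : V) (P : (⊤ : SimpleGraph V).Walk a b), ProperWalk V₁ V₂ SV SE f P →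
      BipLonger (G ⊔ walkGraph P) V₁ V₂ SV SE f P.length ∨
        ∃ S T, BipREwitness ξ G V₁ V₂ SV SE f P S T

lemma exists_isBIPREFrame_selection (ξ : ℝ) (V₁ V₂ : Finset V) :
    ∃ (k : SimpleGraph V → ℕ) (SV : SimpleGraph V → Finset V)
      (SE : SimpleGraph V → Finset (Sym2 V)) (f : SimpleGraph V → V → V),
      ∀ G, BIPREwrt ξ G V₁ V₂ → IsBIPREFrame ξ G V₁ V₂ (k G) (SV G) (SE G) (f G) := by
  have hsel : ∀ G : SimpleGraph V, ∃ k SV SE f,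
      BIPREwrt ξ G V₁ V₂ → IsBIPREFrame ξ G V₁ V₂ k SV SE f := fun G => by
    by_cases h : BIPREwrt ξ G V₁ V₂
    · obtain ⟨k, SV, SE, f, hG⟩ := h
      exact ⟨k, SV, SE, f, fun _ => hG⟩
    · exact ⟨0, ∅, ∅, id, fun h' => (h h').elim⟩
  choose k SV SE f hG using hsel
  exact ⟨k, SV, SE, f, hG⟩

def BipREwitnessAlong (ξ : ℝ) (G : SimpleGraph V) (V₁ V₂ SV : Finset V)
    (SE : Finset (Sym2 V)) (f : V → V) (Ef : Finset (Sym2 V)) (S : Finset V)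
    (T : V → Finset V) : Prop :=
  ∃ (a b : V) (P : (⊤ : SimpleGraph V).Walk a b), P.IsPath ∧ P.edges.toFinset = Ef ∧
    BipREwitness ξ G V₁ V₂ SV SE f P S T

lemma bipREwitness_congr {G : SimpleGraph V} {a b a' b' : V}
    {P : (⊤ : SimpleGraph V).Walk a b} {P' : (⊤ : SimpleGraph V).Walk a' b'} (hP : P.IsPath)
    (hP' : P'.IsPath) (h : P.edges.toFinset = P'.edges.toFinset) {S : Finset V}
    {T : V → Finset V} :
    BipREwitness ξ G V₁ V₂ SV SE f P S T ↔ BipREwitness ξ G V₁ V₂ SV SE f P' S T := by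
  rw [BipREwitness, BipREwitness, walkGraph_eq_fromEdgeSet, walkGraph_eq_fromEdgeSet, h,
    hP.length_eq_card_edges_toFinset, hP'.length_eq_card_edges_toFinset, h]

lemma exists_edges_of_not_bipComplementsWrt {G₁ G₂ : SimpleGraph V}
    (hG₁ : IsBIPREFrame ξ G₁ V₁ V₂ k SV SE f) (h : ¬ BipComplementsWrt ξ G₁ G₂ V₁ V₂) :
    ∃ Ef : Finset (Sym2 V), #Ef < Fintype.card V ∧
      (∃ S T, BipREwitnessAlong ξ G₁ V₁ V₂ SV SE f Ef S T) ∧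
      ∀ S T, BipREwitnessAlong ξ G₁ V₁ V₂ SV SE f Ef S T →
        ∀ v ∈ S, ∀ w ∈ T v, ¬ G₂.Adj v w := by
  obtain ⟨hmatched, hconn, hrot⟩ := hG₁
  by_contra hcon
  refine h ⟨k, SV, SE, f, hmatched, hconn, fun a b P hP => ?_⟩
  refine (hrot a b P hP).imp id fun ⟨S₀, T₀, hw₀⟩ => ?_
  have hlen : #P.edges.toFinset < Fintype.card V :=
    hP.1.length_eq_card_edges_toFinset ▸ hP.1.length_lt
  by_contra hno
  refine hcon ⟨_, hlen, ⟨S₀, T₀, a, b, P, hP.1, rfl, hw₀⟩, ?_⟩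
  rintro S T ⟨a', b', P', hP', hE, hw⟩ v hv w hw' hadj
  exact hno ⟨S, T, (bipREwitness_congr hP' hP.1 hE).mp hw, v, hv, w, hw',
    (le_sup_of_le_left le_sup_right : G₂ ≤ G₁ ⊔ G₂ ⊔ walkGraph P) hadj⟩

theorem one_sub_subgraphProb_bipComplementsWrt_le (G : SimpleGraph V) {p : ℝ} (hp₀ : 0 ≤ p)
    (hp₁ : p ≤ 1) {m q : ℝ}
    (hq : ∀ (S : Finset V) (T : V → Finset V), S ⊆ V₂ → (∀ v ∈ S, T v ⊆ V₁) →
      ξ * Fintype.card V ≤ #S → (∀ v ∈ S, ξ * Fintype.card V ≤ #(T v)) →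
      q ≤ #(crossEdges G S T)) :
    1 - subgraphProb G p (fun H => ∀ H' ≤ H, BIPREwrt ξ H' V₁ V₂ →
        (#H'.edgeFinset : ℝ) ≤ m → BipComplementsWrt ξ H' H V₁ V₂) ≤
      #((univ : Finset (Sym2 V)).powerset.filter fun Ef => #Ef < Fintype.card V) *
        (∑ s ∈ G.edgeFinset.powerset.filter (fun s => (#s : ℝ) ≤ m), p ^ #s) *
        Real.exp (-(p * q)) := by
  obtain ⟨k, SV, SE, f, hframe⟩ := exists_isBIPREFrame_selection (V := V) ξ V₁ V₂
  set sparse := G.edgeFinset.powerset.filter (fun s => (#s : ℝ) ≤ m)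
  set short := (univ : Finset (Sym2 V)).powerset.filter fun Ef => #Ef < Fintype.card V
  -- The index `(s, Ef)` stands for the edge sets of `H'` and of the path `P` that `H` fails
  -- to extend; taking the frame selected for `fromEdgeSet s` makes the witnesses depend on
  -- the index alone.
  let W (i : Finset (Sym2 V) × Finset (Sym2 V)) : Finset V → (V → Finset V) → Prop :=
    let H' := fromEdgeSet (i.1 : Set (Sym2 V))
    BipREwitnessAlong ξ H' V₁ V₂ (SV H') (SE H') (f H') i.2
  let Bad (i : Finset (Sym2 V) × Finset (Sym2 V)) (H : SimpleGraph V) : Prop :=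
    ↑i.1 ⊆ H.edgeSet ∧ (∃ S T, W i S T) ∧ ∀ S T, W i S T → ∀ v ∈ S, ∀ w ∈ T v, ¬ H.Adj v w
  have hbad : ∀ H ≤ G, ¬ (∀ H' ≤ H, BIPREwrt ξ H' V₁ V₂ → (#H'.edgeFinset : ℝ) ≤ m →
      BipComplementsWrt ξ H' H V₁ V₂) → ∃ i ∈ sparse ×ˢ short, Bad i H := by
    intro H hHG hfail
    push Not at hfail
    obtain ⟨H', hH'H, hH', hm, hnot⟩ := hfail
    obtain ⟨Ef, hEf, hex, hedgeless⟩ :=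
      exists_edges_of_not_bipComplementsWrt (hframe H' hH') hnot
    refine ⟨(H'.edgeFinset, Ef), mem_product.mpr ⟨mem_filter.mpr
      ⟨mem_powerset.mpr (edgeFinset_mono (hH'H.trans hHG)), hm⟩,
      mem_filter.mpr ⟨mem_powerset.mpr (subset_univ _), hEf⟩⟩, ?_⟩
    simp only [Bad, W, coe_edgeFinset, fromEdgeSet_edgeSet]
    exact ⟨edgeSet_mono hH'H, hex, hedgeless⟩
  have hsingle : ∀ i ∈ sparse ×ˢ short,
      subgraphProb G p (Bad i) ≤ p ^ #i.1 * Real.exp (-(p * q)) := by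
    intro i hi
    refine subgraphProb_contains_witnesses_edgeless_le G hp₀ hp₁
      (mem_powerset.mp (mem_filter.mp (mem_product.mp hi).1).1) (W i) ?_
    rintro S T ⟨_, _, _, _, _, hS, hScard, hT⟩
    exact hq S T hS (fun v hv => (hT v hv).1) hScard (fun v hv => (hT v hv).2.1)
  calc _ = subgraphProb G p (fun H => ¬ (∀ H' ≤ H, BIPREwrt ξ H' V₁ V₂ →
        (#H'.edgeFinset : ℝ) ≤ m → BipComplementsWrt ξ H' H V₁ V₂)) := by
        rw [← subgraphProb_add_subgraphProb_not G, add_sub_cancel_left]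
    _ ≤ subgraphProb G p (fun H => ∃ i ∈ sparse ×ˢ short, Bad i H) :=
        subgraphProb_mono G hp₀ hp₁ hbad
    _ ≤ ∑ i ∈ sparse ×ˢ short, subgraphProb G p (Bad i) :=
        subgraphProb_exists_le_sum G hp₀ hp₁ _ _
    _ ≤ ∑ i ∈ sparse ×ˢ short, p ^ #i.1 * Real.exp (-(p * q)) := sum_le_sum hsingle
    _ = _ := by
        simp only [sum_product, sum_const, nsmul_eq_mul, mul_sum, sum_mul]
        exact sum_congr rfl fun _ _ => by ring

end Rotation

lemma case_three_le_card_crossEdges {n : ℕ} {G : SimpleGraph (Fin n)} {A : Finset (Fin n)}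
    (heB : (1 / 4 - 14 * paperAlpha) * (n : ℝ) ^ 2 ≤ eBetween G A Aᶜ) {S : Finset (Fin n)}
    {T : Fin n → Finset (Fin n)} (hS : S ⊆ Aᶜ) (hT : ∀ v ∈ S, T v ⊆ A)
    (hScard : 1 / 6 * Fintype.card (Fin n) ≤ (#S : ℝ))
    (hTcard : ∀ v ∈ S, 1 / 6 * Fintype.card (Fin n) ≤ (#(T v) : ℝ)) :
    (n : ℝ) ^ 2 / 72 ≤ #(crossEdges G S T) := by
  have hA := card_mul_card_compl_le A
  have hα : 14 * paperAlpha ≤ 1 / 72 := by norm_num [paperAlpha]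
  rw [Fintype.card_fin] at hA hScard hTcard
  have := le_card_crossEdges G (d := 14 * paperAlpha * n ^ 2) (by nlinarith) hS hT
    (by positivity) hScard hTcard
  nlinarith

theorem case_three_one_sub_subgraphProb_le {n : ℕ} (hn : 3 ≤ n) {β : ℝ} (hβ : 0 < β)
    (G : SimpleGraph (Fin n)) (A : Finset (Fin n))
    (heB : (1 / 4 - 14 * paperAlpha) * (n : ℝ) ^ 2 ≤ eBetween G A Aᶜ) {p : ℝ}
    (hp : 144 * (8 * β + 3) * Real.log n / n ≤ p) (hp₁ : p ≤ 1) :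
    1 - subgraphProb G p (fun H => ∀ H' ≤ H, BIPREwrt (1 / 6) H' A Aᶜ →
        (#H'.edgeFinset : ℝ) ≤ β * n * Real.log n → BipComplementsWrt (1 / 6) H' H A Aᶜ) ≤
      Real.exp (-n) := by
  set L := Real.log n
  have hn' : (3 : ℝ) ≤ n := by exact_mod_cast hn
  have hL : 1 ≤ L := by
    rw [Real.le_log_iff_exp_le (by positivity)]
    linarith [Real.exp_one_lt_d9]
  have hp₀ : 0 ≤ p := le_trans (by positivity) hp
  have hpn : 144 * (8 * β + 3) * n * L ≤ p * n ^ 2 := by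
    rw [div_le_iff₀ (by positivity)] at hp
    nlinarith
  have hshort : (#((univ : Finset (Sym2 (Fin n))).powerset.filter
      fun Ef => #Ef < Fintype.card (Fin n)) : ℝ) ≤ Real.exp (2 * n * L) := by
    simpa only [Fintype.card_fin] using card_short_edgeSets_le_exp (V := Fin n) (by simp; omega)
  have hsparse : ∑ s ∈ G.edgeFinset.powerset.filter (fun s => (#s : ℝ) ≤ β * n * L), p ^ #s ≤
      Real.exp (8 * (β * n * L) + p * n ^ 2 / 256) := by
    refine (sum_pow_card_le_exp G.edgeFinset hp₀ (a := 8) (by norm_num)).trans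
      (Real.exp_le_exp.mpr ?_)
    have hE := card_edgeFinset_le_sq G
    rw [Fintype.card_fin] at hE
    have := mul_le_mul hE exp_neg_eight_le (Real.exp_pos (-8)).le (by positivity)
    nlinarith [mul_le_mul_of_nonneg_left this hp₀]
  calc _ ≤ _ := one_sub_subgraphProb_bipComplementsWrt_le G hp₀ hp₁ (q := n ^ 2 / 72)
          (m := β * n * L) fun S T hS hT hScard hTcard =>
            case_three_le_card_crossEdges heB hS hT hScard hTcard
    _ ≤ Real.exp (2 * n * L) * Real.exp (8 * (β * n * L) + p * n ^ 2 / 256) *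
          Real.exp (-(p * (n ^ 2 / 72))) := by
        gcongr
    _ = Real.exp (2 * n * L + 8 * (β * n * L) + p * n ^ 2 / 256 - p * (n ^ 2 / 72)) := by
        rw [← Real.exp_add, ← Real.exp_add]
        ring_nf
    _ ≤ Real.exp (-n) := Real.exp_le_exp.mpr (by nlinarith)

/-- Lemma 4.9: in the third case of the classification (with `α = 1/2²³`), for every fixed
`β > 0` there is `C = C(β)` such that for `p ≥ C log n / n`, the graph `G_p` a.a.s.
complements every one of its subgraphs with property `BIPRE(1/6)` (w.r.t. the partition
`(A, Ā)`) and at most `β n log n` edges. -/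
theorem case_three_complement (β : ℝ) (hβ : 0 < β) :
    ∃ C : ℝ, ∀ δ : ℝ, 0 < δ → ∃ N : ℕ, ∀ n : ℕ, N ≤ n →
      ∀ (G : SimpleGraph (Fin n)) (A : Finset (Fin n)),
        (∀ v, (n : ℝ) / 2 ≤ (G.degree v : ℝ)) →
        (n : ℝ) / 2 ≤ (A.card : ℝ) → (A.card : ℝ) ≤ (1 / 2 + 16 * paperAlpha) * n →
        (1 / 4 - 14 * paperAlpha) * (n : ℝ) ^ 2 ≤ (eBetween G A Aᶜ : ℝ) →
        (∀ v ∈ A, (n : ℝ) / 64 ≤ ((Aᶜ.filter (G.Adj v)).card : ℝ)) →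
        (∀ v ∈ Aᶜ, (n : ℝ) / 64 ≤ ((A.filter (G.Adj v)).card : ℝ)) →
        (A.card = (n + 1) / 2 ∨ ∀ v ∈ A, ((A.filter (G.Adj v)).card : ℝ) ≤ (n : ℝ) / 32) →
        ∀ p : ℝ, C * Real.log n / n ≤ p → p ≤ 1 →
          1 - δ ≤ subgraphProb G p fun H =>
            ∀ H' : SimpleGraph (Fin n), H' ≤ H → BIPREwrt (1 / 6) H' A Aᶜ →
              (H'.edgeFinset.card : ℝ) ≤ β * n * Real.log n →
              BipComplementsWrt (1 / 6) H' H A Aᶜ := by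
  refine ⟨144 * (8 * β + 3), fun δ hδ => ⟨max 3 ⌈-Real.log δ⌉₊,
    fun n hn G A _ _ _ heB _ _ _ p hp hp₁ => ?_⟩⟩
  have hfail := case_three_one_sub_subgraphProb_le (le_of_max_le_left hn) hβ G A heB hp hp₁
  have hlog : -Real.log δ ≤ n :=
    (Nat.le_ceil _).trans (Nat.cast_le.mpr (le_of_max_le_right hn))
  have hsmall : Real.exp (-n) ≤ δ :=
    (Real.exp_le_exp.mpr (by linarith)).trans_eq (Real.exp_log hδ)
  linarith
end

section
/- Let α be a positive real. Let G be a graph on n vertices with minimum degree at least n/2, and let A be a set of vertices with |A| ≥ n/2 and |A| − |Ā| ≤ 32α·n such that e(A, Ā) ≤ 6α·n². Then the number of edges of G inside A satisfies e(A) ≥ C(|A|, 2) − 11α·n², where C(|A|,2) = |A|(|A|−1)/2. -/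
open SimpleGraph Finset
open scoped Classical

universe u

/-! Summing degrees over `A` counts each edge inside `A` twice and each edge of the cut once,
so `2 e(A) + e(A, Ā) ≥ |A| n / 2`. As `n = |A| + |Ā|` and `|A| - |Ā| ≤ 32 α n`, we get
`|A| n / 2 ≥ |A|² - 16 α n²`, and the cut bound leaves `2 e(A) ≥ |A|² - 22 α n²`. -/

namespace SimpleGraph

variable {V : Type*}

lemma eBetween_eq_sum_card_filter_adj (G : SimpleGraph V) (A B : Finset V) :
    eBetween G A B = ∑ a ∈ A, #{b ∈ B | G.Adj a b} := by
  rw [eBetween, card_filter, sum_product]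
  exact sum_congr rfl fun a _ => (card_filter _ _).symm

variable [Fintype V]

lemma eBetween_self_eq_two_mul_eIn (G : SimpleGraph V) (A : Finset V) :
    eBetween G A A = 2 * eIn G A := by
  let H : SimpleGraph V := ((⊤ : G.Subgraph).induce (A : Set V)).spanningCoe
  have hedges : H.edgeFinset = G.edgeFinset.filter fun e => ∀ v ∈ e, v ∈ A := by
    ext e
    induction e using Sym2.ind
    simp only [H, mem_edgeFinset, Subgraph.edgeSet_spanningCoe, Subgraph.mem_edgeSet,
      Subgraph.induce_adj, SetLike.mem_coe, Subgraph.top_adj, mem_filter, mem_edgeSet,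
      Sym2.mem_iff, forall_eq_or_imp, forall_eq]
    tauto
  have hpairs : (univ.filter fun p : V × V => H.Adj p.1 p.2) =
      (A ×ˢ A).filter fun p => G.Adj p.1 p.2 := by
    ext p
    simp [H, and_assoc]
  rw [eIn, ← hedges, two_mul_card_edgeFinset]
  exact congrArg card hpairs.symm

variable [DecidableEq V]

lemma sum_degree_eq_eBetween_add_eBetween_compl (G : SimpleGraph V) (A : Finset V) :
    ∑ v ∈ A, G.degree v = eBetween G A A + eBetween G A Aᶜ := by
  rw [eBetween_eq_sum_card_filter_adj, eBetween_eq_sum_card_filter_adj, ← sum_add_distrib]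
  refine sum_congr rfl fun a _ => ?_
  rw [degree, neighborFinset_eq_filter, card_filter, card_filter, card_filter,
    ← sum_add_sum_compl A]

lemma card_mul_le_two_mul_eIn_add_eBetween_compl (G : SimpleGraph V) (A : Finset V) {δ : ℝ}
    (hδ : ∀ v, δ ≤ G.degree v) :
    #A * δ ≤ 2 * eIn G A + eBetween G A Aᶜ := by
  have hsum : (∑ v ∈ A, G.degree v : ℕ) = 2 * eIn G A + eBetween G A Aᶜ := by
    rw [sum_degree_eq_eBetween_add_eBetween_compl, eBetween_self_eq_two_mul_eIn]
  calc (#A : ℝ) * δ = ∑ _v ∈ A, δ := by rw [sum_const, nsmul_eq_mul]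
    _ ≤ ∑ v ∈ A, (G.degree v : ℝ) := sum_le_sum fun v _ => hδ v
    _ = 2 * eIn G A + eBetween G A Aᶜ := by exact_mod_cast hsum

end SimpleGraph

theorem edges_inside_dense_side_general (α : ℝ) (hα : 0 < α) (n : ℕ) (G : SimpleGraph (Fin n))
    (hdeg : ∀ v, (n : ℝ) / 2 ≤ (G.degree v : ℝ)) (A : Finset (Fin n))
    (hk : (A.card : ℝ) - (Aᶜ.card : ℝ) ≤ 32 * α * n)
    (hcut : (eBetween G A Aᶜ : ℝ) ≤ 6 * α * (n : ℝ) ^ 2) :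
    (A.card : ℝ) * ((A.card : ℝ) - 1) / 2 - 11 * α * (n : ℝ) ^ 2 ≤ (eIn G A : ℝ) := by
  have hdegsum := G.card_mul_le_two_mul_eIn_add_eBetween_compl A hdeg
  have hcompl : (Aᶜ.card : ℝ) = n - A.card := by
    rw [eq_sub_iff_add_eq']
    exact_mod_cast (card_add_card_compl A).trans (Fintype.card_fin n)
  have hAn : (A.card : ℝ) ≤ n := by linarith [(Aᶜ.card.cast_nonneg : (0 : ℝ) ≤ _)]
  rw [hcompl] at hk
  have hsq : (A.card : ℝ) * A.card ≤ A.card * (n / 2) + 16 * α * n ^ 2 := by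
    have hbalance := mul_le_mul_of_nonneg_left hk (A.card.cast_nonneg : (0 : ℝ) ≤ _)
    have hAn' := mul_le_mul_of_nonneg_right hAn (by positivity : 0 ≤ 32 * α * n)
    linarith
  linarith [(A.card.cast_nonneg : (0 : ℝ) ≤ _)]

/-- The edge-count estimate (4.1): if `|A| ≥ n/2`, `|A| - |Ā| ≤ 32 α n` and
`e(A, Ā) ≤ 6 α n²` in a Dirac graph `G`, then `e(A) ≥ C(|A|,2) - 11 α n²`. -/
theorem edges_inside_dense_side (α : ℝ) (hα : 0 < α) (n : ℕ) (G : SimpleGraph (Fin n))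
    (hdeg : ∀ v, (n : ℝ) / 2 ≤ (G.degree v : ℝ)) (A : Finset (Fin n))
    (hA : (n : ℝ) / 2 ≤ (A.card : ℝ))
    (hk : (A.card : ℝ) - (Aᶜ.card : ℝ) ≤ 32 * α * n)
    (hcut : (eBetween G A Aᶜ : ℝ) ≤ 6 * α * (n : ℝ) ^ 2) :
    (A.card : ℝ) * ((A.card : ℝ) - 1) / 2 - 11 * α * (n : ℝ) ^ 2 ≤ (eIn G A : ℝ) :=
  edges_inside_dense_side_general α hα n G hdeg A hk hcut
end
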